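/- arXiv:2206.14102 — 4 statements merged into one kernel-verified Lean document; each statement's English description precedes it below -/
import Mathlib

section
/- Let E and F be Banach lattices and let T : E → F be a sublinear and monotone operator. Then T is automatically Lipschitz continuous: the quantity ‖T‖ := sup{‖T(f)‖ : f ∈ E, ‖f‖ ≤ 1} is finite, and ‖T(f) − T(g)‖ ≤ ‖T‖·‖f − g‖ for all f, g ∈ E. -/
/-!
Krein's argument. Sublinearity and monotonicity give `|T f - T g| ≤ T |f - g|` and `|T f| ≤ T |f|`,
so by solidity of the norm `‖T f - T g‖ ≤ ‖T |f - g|‖`, and the Lipschitz bound follows from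
positive homogeneity once `T` is bounded on the unit ball. If it were not, pick `‖f n‖ ≤ 1` with
`‖T (f n)‖ > 2 ^ n * n`; then `g = ∑ |2⁻ⁿ f n|` converges by completeness, dominates every
`|2⁻ⁿ f n|`, and monotonicity gives `n < ‖T (2⁻ⁿ f n)‖ ≤ ‖T g‖` for all `n`.
-/

open Set

lemma norm_le_norm_of_abs_le {α : Type*} [NormedAddCommGroup α] [Lattice α] [IsOrderedAddMonoid α]
    [HasSolidNorm α] {a b : α} (h : |a| ≤ b) : ‖a‖ ≤ ‖b‖ :=
  norm_le_norm_of_abs_le_abs (h.trans (le_abs_self b))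

lemma sub_map_le_map_sub {E F : Type*} [AddCommGroup E] [AddCommGroup F] [PartialOrder F]
    [IsOrderedAddMonoid F] {T : E → F} (hsub : ∀ f g : E, T (f + g) ≤ T f + T g) (f g : E) :
    T f - T g ≤ T (f - g) :=
  sub_le_iff_le_add'.mpr (by simpa using hsub g (f - g))

section Sublinear

variable {E F : Type*} [AddCommGroup E] [Lattice E]
  [AddCommGroup F] [Lattice F] [IsOrderedAddMonoid F] {T : E → F}

lemma abs_map_sub_map_le (hsub : ∀ f g : E, T (f + g) ≤ T f + T g)
    (hmono : ∀ f g : E, f ≤ g → T f ≤ T g) (f g : E) : |T f - T g| ≤ T |f - g| := by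
  refine abs_le'.mpr ⟨(sub_map_le_map_sub hsub f g).trans (hmono _ _ (le_abs_self _)), ?_⟩
  rw [neg_sub, abs_sub_comm]
  exact (sub_map_le_map_sub hsub g f).trans (hmono _ _ (le_abs_self _))

lemma abs_map_le_map_abs (hsub : ∀ f g : E, T (f + g) ≤ T f + T g)
    (hmono : ∀ f g : E, f ≤ g → T f ≤ T g) (f : E) : |T f| ≤ T |f| := by
  have hT0 : 0 ≤ T 0 := le_add_iff_nonneg_right (T 0) |>.mp (by simpa using hsub 0 0)
  refine abs_le'.mpr ⟨hmono _ _ (le_abs_self f), ?_⟩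
  calc -T f ≤ T 0 - T f := by simpa using hT0
    _ ≤ T (0 - f) := sub_map_le_map_sub hsub 0 f
    _ ≤ T |f| := hmono _ _ (by simpa using neg_le_abs f)

end Sublinear

lemma norm_map_sub_map_le {E F : Type*} [AddCommGroup E] [Lattice E] [NormedAddCommGroup F]
    [Lattice F] [IsOrderedAddMonoid F] [HasSolidNorm F] {T : E → F}
    (hsub : ∀ f g : E, T (f + g) ≤ T f + T g) (hmono : ∀ f g : E, f ≤ g → T f ≤ T g) (f g : E) :
    ‖T f - T g‖ ≤ ‖T |f - g|‖ :=
  norm_le_norm_of_abs_le (abs_map_sub_map_le hsub hmono f g)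

section PositivelyHomogeneous

variable {E F : Type*} [NormedAddCommGroup E] [NormedSpace ℝ E] [NormedAddCommGroup F]
  [NormedSpace ℝ F] {T : E → F}

lemma bddAbove_norm_map_unitBall_of_summable
    (hhom : ∀ (α : ℝ), 0 ≤ α → ∀ f : E, T (α • f) = α • T f)
    (hsum : ∀ x : ℕ → E, Summable (fun n => ‖x n‖) → BddAbove (range fun n => ‖T (x n)‖)) :
    BddAbove {c : ℝ | ∃ f : E, ‖f‖ ≤ 1 ∧ c = ‖T f‖} := by
  by_contra hS
  choose c hc hlt using not_bddAbove_iff.mp hS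
  choose f hf hcf using fun n : ℕ => hc (2 ^ n * n)
  have hx : Summable fun n : ℕ => ‖((1 : ℝ) / 2) ^ n • f n‖ := by
    refine .of_nonneg_of_le (fun n => norm_nonneg _) (fun n => ?_) summable_geometric_two
    rw [norm_smul_of_nonneg (by positivity)]
    exact mul_le_of_le_one_right (by positivity) (hf _)
  obtain ⟨M, hM⟩ := hsum _ hx
  obtain ⟨n, hn⟩ := exists_nat_gt M
  have hgrow : (n : ℝ) < ‖T (((1 : ℝ) / 2) ^ n • f n)‖ := by
    rw [hhom _ (by positivity), norm_smul_of_nonneg (by positivity), ← hcf]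
    calc (n : ℝ) = (1 / 2) ^ n * (2 ^ n * n) := by rw [← mul_assoc, ← mul_pow]; norm_num
      _ < (1 / 2) ^ n * c (2 ^ n * n) := by gcongr; exact hlt _
  exact (hgrow.trans_le (hM (mem_range_self n))).not_ge hn.le

lemma norm_map_le_sSup_mul_norm (hhom : ∀ (α : ℝ), 0 ≤ α → ∀ f : E, T (α • f) = α • T f)
    (hS : BddAbove {c : ℝ | ∃ f : E, ‖f‖ ≤ 1 ∧ c = ‖T f‖}) (h : E) :
    ‖T h‖ ≤ sSup {c : ℝ | ∃ f : E, ‖f‖ ≤ 1 ∧ c = ‖T f‖} * ‖h‖ := by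
  rcases eq_or_ne h 0 with rfl | hne
  · simpa using hhom 0 le_rfl 0
  have hr : 0 < ‖h‖ := norm_pos_iff.mpr hne
  have hunit : ‖‖h‖⁻¹ • h‖ ≤ 1 := by
    rw [norm_smul_of_nonneg (by positivity), inv_mul_cancel₀ hr.ne']
  calc ‖T h‖ = ‖h‖ * ‖T (‖h‖⁻¹ • h)‖ := by
        rw [hhom _ (by positivity), norm_smul_of_nonneg (by positivity), ← mul_assoc,
          mul_inv_cancel₀ hr.ne', one_mul]
    _ ≤ ‖h‖ * sSup {c : ℝ | ∃ f : E, ‖f‖ ≤ 1 ∧ c = ‖T f‖} :=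
        mul_le_mul_of_nonneg_left (le_csSup hS ⟨_, hunit, rfl⟩) hr.le
    _ = _ := mul_comm _ _

end PositivelyHomogeneous

section Normed

variable {E F : Type*} [NormedAddCommGroup E] [Lattice E] [IsOrderedAddMonoid E] [HasSolidNorm E]
  [NormedAddCommGroup F] [Lattice F] [IsOrderedAddMonoid F] [HasSolidNorm F] {T : E → F}

lemma bddAbove_range_norm_map_of_summable [CompleteSpace E]
    (hsub : ∀ f g : E, T (f + g) ≤ T f + T g) (hmono : ∀ f g : E, f ≤ g → T f ≤ T g)
    (x : ℕ → E) (hx : Summable fun n => ‖x n‖) : BddAbove (range fun n => ‖T (x n)‖) := by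
  have habs : Summable fun n => |x n| := .of_norm (by simpa only [norm_abs_eq_norm] using hx)
  refine ⟨‖T (∑' n, |x n|)‖, forall_mem_range.mpr fun n => norm_le_norm_of_abs_le ?_⟩
  exact (abs_map_le_map_abs hsub hmono (x n)).trans
    (hmono _ _ (habs.le_tsum n fun m _ => abs_nonneg (x m)))

end Normed

theorem sublinear_monotone_lipschitz_general {E F : Type*}
    [NormedAddCommGroup E] [Lattice E] [HasSolidNorm E] [IsOrderedAddMonoid E] [NormedSpace ℝ E] [CompleteSpace E]
    [NormedAddCommGroup F] [Lattice F] [HasSolidNorm F] [IsOrderedAddMonoid F] [NormedSpace ℝ F]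
    (T : E → F)
    (hsub : ∀ f g : E, T (f + g) ≤ T f + T g)
    (hhom : ∀ (α : ℝ), 0 ≤ α → ∀ f : E, T (α • f) = α • T f)
    (hmono : ∀ f g : E, f ≤ g → T f ≤ T g) :
    BddAbove {c : ℝ | ∃ f : E, ‖f‖ ≤ 1 ∧ c = ‖T f‖} ∧
      ∀ f g : E, ‖T f - T g‖ ≤ sSup {c : ℝ | ∃ f : E, ‖f‖ ≤ 1 ∧ c = ‖T f‖} * ‖f - g‖ := by
  have hS := bddAbove_norm_map_unitBall_of_summable hhom
    (bddAbove_range_norm_map_of_summable hsub hmono)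
  refine ⟨hS, fun f g => ?_⟩
  calc ‖T f - T g‖ ≤ ‖T |f - g|‖ := norm_map_sub_map_le hsub hmono f g
    _ ≤ _ * ‖|f - g|‖ := norm_map_le_sSup_mul_norm hhom hS _
    _ = _ := by rw [norm_abs_eq_norm]

/-- **Theorem `thmKrein`.** Every sublinear and monotone operator
`T : E → F` between Banach lattices is Lipschitz continuous: the norm
`‖T‖ = sup {‖T f‖ : ‖f‖ ≤ 1}` is finite, and `‖T f - T g‖ ≤ ‖T‖ ‖f - g‖`. -/
theorem sublinear_monotone_lipschitz {E F : Type*}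
    [NormedAddCommGroup E] [Lattice E] [HasSolidNorm E] [IsOrderedAddMonoid E] [NormedSpace ℝ E] [CompleteSpace E]
    [NormedAddCommGroup F] [Lattice F] [HasSolidNorm F] [IsOrderedAddMonoid F] [NormedSpace ℝ F] [CompleteSpace F]
    (T : E → F)
    (hsub : ∀ f g : E, T (f + g) ≤ T f + T g)
    (hhom : ∀ (α : ℝ), 0 ≤ α → ∀ f : E, T (α • f) = α • T f)
    (hmono : ∀ f g : E, f ≤ g → T f ≤ T g) :
    BddAbove {c : ℝ | ∃ f : E, ‖f‖ ≤ 1 ∧ c = ‖T f‖} ∧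
      ∀ f g : E, ‖T f - T g‖ ≤ sSup {c : ℝ | ∃ f : E, ‖f‖ ≤ 1 ∧ c = ‖T f‖} * ‖f - g‖ :=
  sublinear_monotone_lipschitz_general T hsub hhom hmono
end

section
/- Let X be a locally compact subset of ℝ^N equipped with a positive Borel measure μ, and let E be a vector sublattice of the real-valued functions on X containing the restrictions to X of the test functions 1, pr_1, …, pr_N, −pr_1, …, −pr_N and Σ_{k=1}^N pr_k². Let (T_n) be a sequence of sublinear and monotone operators from E into E such that for each of these 2N+2 test functions h one has T_n(h)(x) → f(x) for μ-almost every x ∈ X. Then for every nonnegative f ∈ E that is bounded and whose set of points of discontinuity is μ-null, one has T_n(f)(x) → f(x) for μ-almost every x ∈ X. -/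
open MeasureTheory Filter Topology Set

section Aux
variable {X : Type*} {E : Set (X → ℝ)} {T : ℕ → (X → ℝ) → (X → ℝ)} {x : X}

def Good (E : Set (X → ℝ)) (T : ℕ → (X → ℝ) → (X → ℝ)) (x : X) (g : X → ℝ) : Prop :=
  g ∈ E ∧ ∀ ε : ℝ, 0 < ε → ∀ᶠ n in atTop, T n g x ≤ g x + ε

theorem good_of_tendsto {g : X → ℝ} (hg : g ∈ E)
    (h : Tendsto (fun n => T n g x) atTop (𝓝 (g x))) : Good E T x g :=
  ⟨hg, fun _ hε => h.eventually (eventually_le_nhds (lt_add_of_pos_right _ hε))⟩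

theorem good_add (hEadd : ∀ f ∈ E, ∀ g ∈ E, f + g ∈ E)
    (hsubadd : ∀ n, ∀ f ∈ E, ∀ g ∈ E, T n (f + g) ≤ T n f + T n g)
    {g g' : X → ℝ} (hg : Good E T x g) (hg' : Good E T x g') : Good E T x (g + g') := by
  refine ⟨hEadd _ hg.1 _ hg'.1, fun ε hε => ?_⟩
  filter_upwards [hg.2 (ε/2) (by linarith), hg'.2 (ε/2) (by linarith)] with n h1 h2
  have h3 := hsubadd n g hg.1 g' hg'.1 x
  simp only [Pi.add_apply] at h3 ⊢
  linarith

theorem good_smul (hEsmul : ∀ (c : ℝ), ∀ f ∈ E, c • f ∈ E)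
    (hhom : ∀ n, ∀ (α : ℝ), 0 ≤ α → ∀ f ∈ E, T n (α • f) = α • T n f)
    {c : ℝ} (hc : 0 ≤ c) {g : X → ℝ} (hg : Good E T x g) : Good E T x (c • g) := by
  refine ⟨hEsmul c g hg.1, fun ε hε => ?_⟩
  rcases eq_or_lt_of_le hc with h0 | h0
  · refine Eventually.of_forall fun n => ?_
    rw [hhom n c hc g hg.1]
    simp only [Pi.smul_apply, smul_eq_mul, ← h0, zero_mul, zero_add]
    linarith
  · filter_upwards [hg.2 (ε/c) (by positivity)] with n hn
    rw [hhom n c hc g hg.1]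
    simp only [Pi.smul_apply, smul_eq_mul]
    have h1 : c * T n g x ≤ c * (g x + ε/c) := mul_le_mul_of_nonneg_left hn hc
    have h2 : c * (g x + ε / c) = c * g x + ε := by field_simp
    linarith

theorem good_zero (hone : (fun _ : X => (1:ℝ)) ∈ E)
    (hEsmul : ∀ (c : ℝ), ∀ f ∈ E, c • f ∈ E)
    (hhom : ∀ n, ∀ (α : ℝ), 0 ≤ α → ∀ f ∈ E, T n (α • f) = α • T n f) :
    Good E T x 0 := by
  have h0 : ((0:ℝ) • (fun _ : X => (1:ℝ))) = (0 : X → ℝ) := zero_smul _ _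
  refine ⟨h0 ▸ hEsmul 0 _ hone, fun ε hε => Eventually.of_forall fun n => ?_⟩
  have h := hhom n 0 le_rfl _ hone
  rw [h0] at h
  rw [h]
  simp only [Pi.smul_apply, smul_eq_mul, zero_mul, Pi.zero_apply, zero_add]
  linarith

end Aux

/-- **Theorem `thm_a.e.Conv` (i).** Korovkin-type theorem for a.e.
convergence: sublinear and monotone operators on a vector sublattice `E` of
functions on a locally compact subset `X ⊆ ℝ^N`, with the `2N+2` test functions
`1, ±pr_1, …, ±pr_N, Σ pr_k²`; conclusion for nonnegative bounded a.e.-continuous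
members of `E`. -/
theorem korovkin_ae_nonneg {N : ℕ} (X : Set (Fin N → ℝ)) [LocallyCompactSpace X]
    (μ : Measure X)
    (E : Set (X → ℝ))
    -- `E` is a vector sublattice of `𝓕(X)`
    (hEadd : ∀ f ∈ E, ∀ g ∈ E, f + g ∈ E)
    (hEsmul : ∀ (c : ℝ), ∀ f ∈ E, c • f ∈ E)
    (hEsup : ∀ f ∈ E, ∀ g ∈ E, f ⊔ g ∈ E)
    -- `E` contains the test functions
    (hone : (fun _ : X => (1 : ℝ)) ∈ E)
    (hpr : ∀ k : Fin N, (fun x : X => (x : Fin N → ℝ) k) ∈ E)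
    (hprneg : ∀ k : Fin N, (fun x : X => -((x : Fin N → ℝ) k)) ∈ E)
    (hsq : (fun x : X => ∑ k, ((x : Fin N → ℝ) k) ^ 2) ∈ E)
    -- `(T n)` is a sequence of sublinear and monotone operators from `E` into `E`
    (T : ℕ → (X → ℝ) → (X → ℝ))
    (hmap : ∀ n, ∀ f ∈ E, T n f ∈ E)
    (hsubadd : ∀ n, ∀ f ∈ E, ∀ g ∈ E, T n (f + g) ≤ T n f + T n g)
    (hhom : ∀ n, ∀ (α : ℝ), 0 ≤ α → ∀ f ∈ E, T n (α • f) = α • T n f)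
    (hmono : ∀ n, ∀ f ∈ E, ∀ g ∈ E, f ≤ g → T n f ≤ T n g)
    -- a.e. convergence on the test functions
    (htest1 : ∀ᵐ x ∂μ, Tendsto (fun n => T n (fun _ => 1) x) atTop (𝓝 1))
    (htestpr : ∀ k : Fin N, ∀ᵐ x ∂μ,
      Tendsto (fun n => T n (fun y : X => (y : Fin N → ℝ) k) x) atTop
        (𝓝 ((x : Fin N → ℝ) k)))
    (htestprneg : ∀ k : Fin N, ∀ᵐ x ∂μ,
      Tendsto (fun n => T n (fun y : X => -((y : Fin N → ℝ) k)) x) atTop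
        (𝓝 (-((x : Fin N → ℝ) k))))
    (htestsq : ∀ᵐ x ∂μ,
      Tendsto (fun n => T n (fun y : X => ∑ k, ((y : Fin N → ℝ) k) ^ 2) x) atTop
        (𝓝 (∑ k, ((x : Fin N → ℝ) k) ^ 2)))
    -- conclusion, for nonnegative bounded a.e. continuous `f ∈ E`
    (f : X → ℝ) (hfE : f ∈ E) (hf0 : 0 ≤ f)
    (hfb : ∃ M : ℝ, ∀ x, |f x| ≤ M)
    (hfc : μ {x | ¬ ContinuousAt f x} = 0) :
    ∀ᵐ x ∂μ, Tendsto (fun n => T n f x) atTop (𝓝 (f x)) := by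
  obtain ⟨M₀, hM₀⟩ := hfb
  set M : ℝ := max M₀ 1 with hMdef
  have hM : ∀ y, |f y| ≤ M := fun y => (hM₀ y).trans (le_max_left _ _)
  have hM1 : (1:ℝ) ≤ M := le_max_right _ _
  have hcont : ∀ᵐ x ∂μ, ContinuousAt f x := by
    rw [ae_iff]; exact hfc
  filter_upwards [htest1, ae_all_iff.2 htestpr, ae_all_iff.2 htestprneg, htestsq, hcont]
    with x h1 hp hnp hsqx hcx
  rw [Metric.tendsto_nhds]
  intro ε₀ hε₀
  have hM2 : (0:ℝ) < M + 2 := by linarith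
  set ε : ℝ := ε₀ / (2*(M+2)) with hεdef
  have hε : 0 < ε := by positivity
  obtain ⟨δ, hδ, hδf⟩ := Metric.continuousAt_iff.1 hcx ε hε
  set c : ℝ := 2*M/δ^2 with hcdef
  have hc0 : 0 ≤ c := by positivity
  have hcδ : c * δ^2 = 2*M := by
    rw [hcdef]; field_simp
  -- the quadratic
  set q : X → ℝ := fun y => ∑ k, (((y:Fin N → ℝ) k) - ((x:Fin N → ℝ) k))^2 with hqdef
  have hq0 : ∀ y, 0 ≤ q y := fun y => Finset.sum_nonneg fun k _ => sq_nonneg _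
  -- coordinate pieces
  set s : Fin N → (X → ℝ) := fun k =>
    if 0 ≤ (x : Fin N → ℝ) k then
      (2*c*|(x : Fin N → ℝ) k|) • (fun y : X => -((y : Fin N → ℝ) k))
    else
      (2*c*|(x : Fin N → ℝ) k|) • (fun y : X => ((y : Fin N → ℝ) k)) with hsdef
  have hsval : ∀ k (y : X), s k y = -2*c*((x:Fin N → ℝ) k)*((y:Fin N → ℝ) k) := by
    intro k y
    by_cases h : 0 ≤ (x : Fin N → ℝ) k
    · simp only [hsdef, if_pos h, Pi.smul_apply, smul_eq_mul, abs_of_nonneg h]; ring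
    · push_neg at h
      simp only [hsdef, if_neg (not_le.2 h), Pi.smul_apply, smul_eq_mul, abs_of_neg h]; ring
  have hsgood : ∀ k, Good E T x (s k) := by
    intro k
    by_cases h : 0 ≤ (x : Fin N → ℝ) k
    · rw [hsdef]; simp only [if_pos h]
      exact good_smul hEsmul hhom (by positivity) (good_of_tendsto (hprneg k) (hnp k))
    · rw [hsdef]; simp only [if_neg h]
      exact good_smul hEsmul hhom (by positivity) (good_of_tendsto (hpr k) (hp k))
  set g : X → ℝ :=
    (ε + c * ∑ k, ((x:Fin N → ℝ) k)^2) • (fun _ : X => (1:ℝ))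
    + c • (fun y : X => ∑ k, ((y:Fin N → ℝ) k)^2)
    + ∑ k, s k with hgdef
  have hSx : (0:ℝ) ≤ ∑ k, ((x:Fin N → ℝ) k)^2 := Finset.sum_nonneg fun k _ => sq_nonneg _
  have goodg : Good E T x g := by
    refine good_add hEadd hsubadd (good_add hEadd hsubadd ?_ ?_) ?_
    · exact good_smul hEsmul hhom (by positivity) (good_of_tendsto hone h1)
    · exact good_smul hEsmul hhom hc0 (good_of_tendsto hsq hsqx)
    · exact Finset.sum_induction s (Good E T x)
        (fun a b ha hb => good_add hEadd hsubadd ha hb)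
        (good_zero hone hEsmul hhom) (fun k _ => hsgood k)
  have gval : ∀ y : X, g y = ε + c * q y := by
    intro y
    have hsum : (∑ k, s k) y = ∑ k, s k y := by simp [Finset.sum_apply]
    have key : c * q y = c * (∑ k, ((x:Fin N → ℝ) k)^2) + c * (∑ k, ((y:Fin N → ℝ) k)^2)
        + ∑ k, (-2*c*((x:Fin N → ℝ) k)*((y:Fin N → ℝ) k)) := by
      rw [hqdef]
      rw [Finset.mul_sum, Finset.mul_sum, Finset.mul_sum, ← Finset.sum_add_distrib,
        ← Finset.sum_add_distrib]
      exact Finset.sum_congr rfl fun k _ => by ring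
    simp only [hgdef, Pi.add_apply, Pi.smul_apply, smul_eq_mul, hsum]
    rw [Finset.sum_congr rfl (fun k _ => hsval k y), key]
    ring
  -- the pointwise estimate
  have habs : ∀ y : X, |f y - f x| ≤ ε + c * q y := by
    intro y
    by_cases hd : dist y x < δ
    · have h := hδf hd
      rw [Real.dist_eq] at h
      have := mul_nonneg hc0 (hq0 y)
      exact le_trans h.le (by linarith)
    · push_neg at hd
      have hyx : δ ≤ dist (y : Fin N → ℝ) (x : Fin N → ℝ) := by
        rw [← Subtype.dist_eq]; exact hd
      have hex : ∃ k, δ ≤ dist ((y:Fin N → ℝ) k) ((x:Fin N → ℝ) k) := by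
        by_contra hcon
        push_neg at hcon
        exact absurd ((dist_pi_lt_iff hδ).2 hcon) (not_lt.2 hyx)
      obtain ⟨k, hk⟩ := hex
      rw [Real.dist_eq] at hk
      have hq1 : δ^2 ≤ (((y:Fin N → ℝ) k) - ((x:Fin N → ℝ) k))^2 := by
        have := pow_le_pow_left₀ hδ.le hk 2
        rwa [sq_abs] at this
      have hq2 : (((y:Fin N → ℝ) k) - ((x:Fin N → ℝ) k))^2 ≤ q y := by
        rw [hqdef]
        exact Finset.single_le_sum (fun i _ => sq_nonneg ((((y:Fin N → ℝ) i) - ((x:Fin N → ℝ) i)))) (Finset.mem_univ k)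
      have h2M : 2*M ≤ c * q y := by
        calc 2*M = c * δ^2 := hcδ.symm
          _ ≤ c * q y := mul_le_mul_of_nonneg_left (hq1.trans hq2) hc0
      have hb1 := abs_le.1 (hM y)
      have hb2 := abs_le.1 (hM x)
      rw [abs_le]
      constructor <;> linarith
  -- function inequalities
  have hgE : g ∈ E := goodg.1
  have hfxone : (f x) • (fun _ : X => (1:ℝ)) ∈ E := hEsmul _ _ hone
  have hfx0 : 0 ≤ f x := hf0 x
  have honeval : ∀ n, T n ((f x) • (fun _ : X => (1:ℝ))) x
      = f x * T n (fun _ : X => (1:ℝ)) x := by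
    intro n
    rw [hhom n (f x) hfx0 _ hone]
    simp [Pi.smul_apply]
  have hup : ∀ n, T n f x ≤ f x * T n (fun _ : X => (1:ℝ)) x + T n g x := by
    intro n
    have m1 : f ≤ (f x) • (fun _ : X => (1:ℝ)) + g := by
      intro y
      have hb := (abs_le.1 (habs y)).2
      simp only [Pi.add_apply, Pi.smul_apply, smul_eq_mul, gval y, mul_one]
      linarith
    have t1 := hmono n f hfE _ (hEadd _ hfxone _ hgE) m1 x
    have t2 := hsubadd n _ hfxone _ hgE x
    simp only [Pi.add_apply] at t1 t2
    rw [honeval n] at t2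
    linarith
  have hlo : ∀ n, f x * T n (fun _ : X => (1:ℝ)) x ≤ T n f x + T n g x := by
    intro n
    have m2 : (f x) • (fun _ : X => (1:ℝ)) ≤ f + g := by
      intro y
      have hb := (abs_le.1 (habs y)).1
      simp only [Pi.add_apply, Pi.smul_apply, smul_eq_mul, gval y, mul_one]
      linarith
    have t1 := hmono n _ hfxone _ (hEadd _ hfE _ hgE) m2 x
    have t2 := hsubadd n _ hfE _ hgE x
    simp only [Pi.add_apply] at t1 t2
    rw [honeval n] at t1
    linarith
  -- conclude
  have hgx : g x = ε := by
    rw [gval x]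
    have : q x = 0 := by simp [hqdef]
    rw [this]; ring
  have e1 : ∀ᶠ n in atTop, |T n (fun _ : X => (1:ℝ)) x - 1| < ε := by
    have := Metric.tendsto_nhds.1 h1 ε hε
    simpa [Real.dist_eq] using this
  filter_upwards [e1, goodg.2 ε hε] with n hn1 hn2
  rw [Real.dist_eq, abs_lt]
  rw [hgx] at hn2
  have hb := abs_lt.1 hn1
  have hfxM : f x ≤ M := (abs_le.1 (hM x)).2
  have hcalc : (M+2)*ε = ε₀/2 := by
    rw [hεdef]; field_simp
  have u1 : f x * T n (fun _ : X => (1:ℝ)) x ≤ f x * (1+ε) :=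
    mul_le_mul_of_nonneg_left (by linarith) hfx0
  have u2 : f x * (1-ε) ≤ f x * T n (fun _ : X => (1:ℝ)) x :=
    mul_le_mul_of_nonneg_left (by linarith) hfx0
  have u3 : f x * ε ≤ M * ε := mul_le_mul_of_nonneg_right hfxM hε.le
  constructor
  · nlinarith [hlo n]
  · nlinarith [hup n]
end

section
/- Let X be a locally compact subset of ℝ^N equipped with a positive Borel measure μ, and let E be a vector sublattice of the real-valued functions on X containing the restrictions to X of the test functions 1, pr_1, …, pr_N, −pr_1, …, −pr_N and Σ_{k=1}^N pr_k². Let (T_n) be a sequence of weakly nonlinear (sublinear and translatable) and monotone operators from E into E such that for each of these 2N+2 test functions h one has T_n(h)(x) → h(x) for μ-almost every x ∈ X. Then for every f ∈ E that is bounded and whose set of points of discontinuity is μ-null, one has T_n(f)(x) → f(x) for μ-almost every x ∈ X. -/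
open MeasureTheory Filter Topology Set

/-!
Fix a point `x₀` at which all test functions converge and `f` is continuous, and put
`q y = ∑ k, (y k - x₀ k) ^ 2`. Writing `-2 x₀ k • pr_k` as a nonnegative combination of `pr_k`
and `-pr_k`, `q` is a nonnegative combination of test functions plus a nonnegative constant, so
sublinearity and translatability give `limsup T_n q (x₀) ≤ q x₀ = 0`, while monotonicity gives
`T_n q ≥ 0`. Continuity at `x₀` and boundedness give `|f - f x₀| ≤ ε + C_ε q`, and monotonicity
and sublinearity then trap `T_n f (x₀)` between `(f x₀ ∓ ε) T_n 1 (x₀) ∓ C_ε T_n q (x₀)`.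
-/

theorem sum_sq_sub_eq {X ι : Type*} [Fintype ι] (p : ι → X → ℝ) (a : ι → ℝ) :
    (fun y => ∑ i, (p i y - a i) ^ 2) =
      ((fun y => ∑ i, p i y ^ 2) + ∑ i, ((2 * a i)⁺ • (-p i) + (2 * a i)⁻ • p i)) +
        (∑ i, a i ^ 2) • 1 := by
  funext y
  simp only [Pi.add_apply, Pi.smul_apply, Finset.sum_apply, Pi.neg_apply, smul_eq_mul,
    Pi.one_apply, mul_one, ← Finset.sum_add_distrib]
  refine Finset.sum_congr rfl fun i _ => ?_
  linear_combination p i y * posPart_sub_negPart (2 * a i)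

structure IsWeaklyNonlinearMonotoneOn {X : Type*} (E : Submodule ℝ (X → ℝ))
    (T : (X → ℝ) → X → ℝ) : Prop where
  map_add_le : ∀ f ∈ E, ∀ g ∈ E, T (f + g) ≤ T f + T g
  map_smul_of_nonneg : ∀ α : ℝ, 0 ≤ α → ∀ f ∈ E, T (α • f) = α • T f
  mono : ∀ f ∈ E, ∀ g ∈ E, f ≤ g → T f ≤ T g
  map_add_smul_one : ∀ f ∈ E, ∀ α : ℝ, 0 ≤ α → T (f + α • 1) = T f + α • T 1

namespace IsWeaklyNonlinearMonotoneOn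

variable {X : Type*} {E : Submodule ℝ (X → ℝ)} {T : (X → ℝ) → X → ℝ}

theorem map_zero (hT : IsWeaklyNonlinearMonotoneOn E T) : T 0 = 0 := by
  simpa using hT.map_smul_of_nonneg 0 le_rfl 0 E.zero_mem

theorem map_sum_le (hT : IsWeaklyNonlinearMonotoneOn E T) {ι : Type*} (s : Finset ι)
    (g : ι → X → ℝ) (hg : ∀ i ∈ s, g i ∈ E) : T (∑ i ∈ s, g i) ≤ ∑ i ∈ s, T (g i) :=
  Finset.le_sum_of_subadditive_on_pred T (· ∈ E) hT.map_zero.le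
    (fun f g hf hg => hT.map_add_le f hf g hg) (fun _ _ => E.add_mem) g hg

theorem map_nonneg (hT : IsWeaklyNonlinearMonotoneOn E T) {f : X → ℝ} (hf : f ∈ E)
    (hf0 : 0 ≤ f) : 0 ≤ T f :=
  hT.map_zero ▸ hT.mono 0 E.zero_mem f hf hf0

/-- Translatability is only assumed for nonnegative constants; for `c < 0` the constant is moved
to the left-hand side. -/
theorem le_add_smul_one (hT : IsWeaklyNonlinearMonotoneOn E T) (h1 : 1 ∈ E) {f g : X → ℝ}
    (hf : f ∈ E) (hg : g ∈ E) {c : ℝ} (h : f ≤ g + c • 1) : T f ≤ T g + c • T 1 := by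
  rcases le_total 0 c with hc | hc
  · calc T f ≤ T (g + c • 1) := hT.mono f hf _ (E.add_mem hg (E.smul_mem c h1)) h
      _ = T g + c • T 1 := hT.map_add_smul_one g hg c hc
  · have hle : f + (-c) • 1 ≤ g := fun x => by
      have := h x
      simp only [Pi.add_apply, Pi.smul_apply, smul_eq_mul] at this ⊢
      linarith
    have hT_le := hT.mono _ (E.add_mem hf (E.smul_mem (-c) h1)) g hg hle
    rw [hT.map_add_smul_one f hf (-c) (neg_nonneg.2 hc)] at hT_le
    intro x
    have := hT_le x
    simp only [Pi.add_apply, Pi.smul_apply, smul_eq_mul] at this ⊢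
    linarith

theorem apply_mem_Icc_of_abs_sub_le (hT : IsWeaklyNonlinearMonotoneOn E T) (h1 : 1 ∈ E)
    {f q : X → ℝ} (hf : f ∈ E) (hq : q ∈ E) {C ε : ℝ} (hC : 0 ≤ C) {x₀ : X}
    (hdom : ∀ y, |f y - f x₀| ≤ ε + C * q y) (x : X) :
    T f x ∈ Icc ((f x₀ - ε) * T 1 x - C * T q x) (C * T q x + (f x₀ + ε) * T 1 x) := by
  have hCq : T (C • q) = C • T q := hT.map_smul_of_nonneg C hC q hq
  have hCqE : C • q ∈ E := E.smul_mem C hq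
  constructor
  · have hle : (0 : X → ℝ) ≤ (f + C • q) + (ε - f x₀) • 1 := fun y => by
      have := (abs_le.1 (hdom y)).1
      simp only [Pi.zero_apply, Pi.add_apply, Pi.smul_apply, smul_eq_mul, Pi.one_apply]
      linarith
    have h0 := hT.le_add_smul_one h1 E.zero_mem (E.add_mem hf hCqE) hle x
    have hadd := hT.map_add_le f hf _ hCqE x
    rw [hT.map_zero] at h0
    rw [hCq] at hadd
    simp only [Pi.zero_apply, Pi.add_apply, Pi.smul_apply, smul_eq_mul] at h0 hadd
    linarith
  · have hle : f ≤ C • q + (f x₀ + ε) • 1 := fun y => by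
      have := (abs_le.1 (hdom y)).2
      simp only [Pi.add_apply, Pi.smul_apply, smul_eq_mul, Pi.one_apply]
      linarith
    have h0 := hT.le_add_smul_one h1 hf hCqE hle x
    rw [hCq] at h0
    simpa only [Pi.add_apply, Pi.smul_apply, smul_eq_mul] using h0

theorem map_smul_add_smul_le (hT : IsWeaklyNonlinearMonotoneOn E T) {f g : X → ℝ}
    (hf : f ∈ E) (hg : g ∈ E) {α β : ℝ} (hα : 0 ≤ α) (hβ : 0 ≤ β) :
    T (α • f + β • g) ≤ α • T f + β • T g := by
  rw [← hT.map_smul_of_nonneg α hα f hf, ← hT.map_smul_of_nonneg β hβ g hg]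
  exact hT.map_add_le _ (E.smul_mem α hf) _ (E.smul_mem β hg)

theorem apply_sum_sq_sub_le (hT : IsWeaklyNonlinearMonotoneOn E T) {ι : Type*} [Fintype ι]
    {p : ι → X → ℝ} (hp : ∀ i, p i ∈ E) (hsq : (fun y => ∑ i, p i y ^ 2) ∈ E) (a : ι → ℝ)
    (x : X) :
    T (fun y => ∑ i, (p i y - a i) ^ 2) x ≤ T (fun y => ∑ i, p i y ^ 2) x +
      ∑ i, ((2 * a i)⁺ * T (-p i) x + (2 * a i)⁻ * T (p i) x) + (∑ i, a i ^ 2) * T 1 x := by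
  have hF : ∀ i ∈ Finset.univ, (2 * a i)⁺ • (-p i) + (2 * a i)⁻ • p i ∈ E := fun i _ =>
    E.add_mem (E.smul_mem _ (E.neg_mem (hp i))) (E.smul_mem _ (hp i))
  have hsum := hT.map_sum_le Finset.univ _ hF x
  rw [Finset.sum_apply] at hsum
  rw [sum_sq_sub_eq, hT.map_add_smul_one _ (E.add_mem hsq (E.sum_mem hF)) _
    (Finset.sum_nonneg fun i _ => sq_nonneg _)]
  calc _ ≤ T (fun y => ∑ i, p i y ^ 2) x +
        T (∑ i, ((2 * a i)⁺ • (-p i) + (2 * a i)⁻ • p i)) x + (∑ i, a i ^ 2) * T 1 x :=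
        add_le_add_left (hT.map_add_le _ hsq _ (E.sum_mem hF) x) _
    _ ≤ _ := by
      gcongr
      refine hsum.trans (Finset.sum_le_sum fun i _ => ?_)
      exact hT.map_smul_add_smul_le (E.neg_mem (hp i)) (hp i) (posPart_nonneg _)
        (negPart_nonneg _) x

end IsWeaklyNonlinearMonotoneOn

section KorovkinAtPoint

variable {X : Type*} {E : Submodule ℝ (X → ℝ)} {T : ℕ → (X → ℝ) → X → ℝ}

theorem tendsto_apply_of_forall_abs_sub_le (hT : ∀ n, IsWeaklyNonlinearMonotoneOn E (T n))
    (h1 : 1 ∈ E) {f q : X → ℝ} (hf : f ∈ E) (hq : q ∈ E) {x₀ : X}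
    (hT1 : Tendsto (fun n => T n 1 x₀) atTop (𝓝 1))
    (hTq : Tendsto (fun n => T n q x₀) atTop (𝓝 0))
    (hdom : ∀ ε > 0, ∃ C ≥ 0, ∀ y, |f y - f x₀| ≤ ε + C * q y) :
    Tendsto (fun n => T n f x₀) atTop (𝓝 (f x₀)) := by
  rw [Metric.tendsto_nhds]
  intro ε hε
  obtain ⟨C, hC, hCdom⟩ := hdom (ε / 2) (half_pos hε)
  have hupper : Tendsto (fun n => C * T n q x₀ + (f x₀ + ε / 2) * T n 1 x₀) atTop
      (𝓝 (f x₀ + ε / 2)) := by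
    simpa using (hTq.const_mul C).add (hT1.const_mul (f x₀ + ε / 2))
  have hlower : Tendsto (fun n => (f x₀ - ε / 2) * T n 1 x₀ - C * T n q x₀) atTop
      (𝓝 (f x₀ - ε / 2)) := by
    simpa using (hT1.const_mul (f x₀ - ε / 2)).sub (hTq.const_mul C)
  filter_upwards [hupper.eventually_lt_const (by linarith : f x₀ + ε / 2 < f x₀ + ε),
    hlower.eventually_const_lt (by linarith : f x₀ - ε < f x₀ - ε / 2)] with n hu hl
  obtain ⟨hl', hu'⟩ := (hT n).apply_mem_Icc_of_abs_sub_le h1 hf hq hC hCdom x₀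
  rw [Real.dist_eq, abs_sub_lt_iff]
  constructor <;> linarith

variable {ι : Type*} [Fintype ι]

theorem sum_sq_sub_mem (h1 : 1 ∈ E) {p : ι → X → ℝ} (hp : ∀ i, p i ∈ E)
    (hsq : (fun y => ∑ i, p i y ^ 2) ∈ E) (a : ι → ℝ) :
    (fun y => ∑ i, (p i y - a i) ^ 2) ∈ E := by
  rw [sum_sq_sub_eq]
  refine E.add_mem (E.add_mem hsq (E.sum_mem fun i _ => ?_)) (E.smul_mem _ h1)
  exact E.add_mem (E.smul_mem _ (E.neg_mem (hp i))) (E.smul_mem _ (hp i))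

theorem tendsto_apply_sum_sq_sub (hT : ∀ n, IsWeaklyNonlinearMonotoneOn E (T n)) (h1 : 1 ∈ E)
    {p : ι → X → ℝ} (hp : ∀ i, p i ∈ E) (hsq : (fun y => ∑ i, p i y ^ 2) ∈ E) {x₀ : X}
    (hT1 : Tendsto (fun n => T n 1 x₀) atTop (𝓝 1))
    (hTp : ∀ i, Tendsto (fun n => T n (p i) x₀) atTop (𝓝 (p i x₀)))
    (hTpneg : ∀ i, Tendsto (fun n => T n (-p i) x₀) atTop (𝓝 (-p i x₀)))
    (hTsq : Tendsto (fun n => T n (fun y => ∑ i, p i y ^ 2) x₀) atTop (𝓝 (∑ i, p i x₀ ^ 2))) :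
    Tendsto (fun n => T n (fun y => ∑ i, (p i y - p i x₀) ^ 2) x₀) atTop (𝓝 0) := by
  set a : ι → ℝ := fun i => p i x₀
  have hlim : Tendsto (fun n => T n (fun y => ∑ i, p i y ^ 2) x₀ +
      ∑ i, ((2 * a i)⁺ * T n (-p i) x₀ + (2 * a i)⁻ * T n (p i) x₀) +
        (∑ i, a i ^ 2) * T n 1 x₀) atTop
      (𝓝 (∑ i, a i ^ 2 + ∑ i, ((2 * a i)⁺ * -a i + (2 * a i)⁻ * a i) + (∑ i, a i ^ 2) * 1)) :=
    (hTsq.add (tendsto_finsetSum _ fun i _ =>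
      ((hTpneg i).const_mul _).add ((hTp i).const_mul _))).add (hT1.const_mul _)
  have hval : ∑ i, a i ^ 2 + ∑ i, ((2 * a i)⁺ * -a i + (2 * a i)⁻ * a i) +
      (∑ i, a i ^ 2) * 1 = 0 := by
    have hterm : ∀ i, (2 * a i)⁺ * -a i + (2 * a i)⁻ * a i = -2 * a i ^ 2 := fun i => by
      linear_combination (-a i) * posPart_sub_negPart (2 * a i)
    rw [Finset.sum_congr rfl fun i _ => hterm i, ← Finset.mul_sum]
    ring
  rw [hval] at hlim
  exact squeeze_zero (fun n => (hT n).map_nonneg (sum_sq_sub_mem h1 hp hsq a)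
    (fun y => Finset.sum_nonneg fun i _ => sq_nonneg _) x₀)
    (fun n => (hT n).apply_sum_sq_sub_le hp hsq a x₀) hlim

end KorovkinAtPoint

theorem ContinuousAt.exists_abs_sub_le_add_mul_dist_sq {α : Type*} [PseudoMetricSpace α]
    {f : α → ℝ} {x₀ : α} (hf : ContinuousAt f x₀) {M : ℝ} (hM : ∀ x, |f x| ≤ M) {ε : ℝ}
    (hε : 0 < ε) : ∃ C ≥ 0, ∀ y, |f y - f x₀| ≤ ε + C * dist y x₀ ^ 2 := by
  obtain ⟨δ, hδ, hfδ⟩ := Metric.continuousAt_iff.1 hf ε hε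
  have hM0 : 0 ≤ M := (abs_nonneg _).trans (hM x₀)
  refine ⟨2 * M / δ ^ 2, by positivity, fun y => ?_⟩
  rcases lt_or_ge (dist y x₀) δ with hy | hy
  · have hfy := hfδ hy
    rw [Real.dist_eq] at hfy
    have : 0 ≤ 2 * M / δ ^ 2 * dist y x₀ ^ 2 := by positivity
    linarith
  · calc |f y - f x₀| ≤ |f y| + |f x₀| := abs_sub _ _
      _ ≤ 2 * M := by linarith [hM y, hM x₀]
      _ = 2 * M / δ ^ 2 * δ ^ 2 := by field_simp
      _ ≤ 2 * M / δ ^ 2 * dist y x₀ ^ 2 := by gcongr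
      _ ≤ ε + 2 * M / δ ^ 2 * dist y x₀ ^ 2 := le_add_of_nonneg_left hε.le

theorem dist_sq_le_sum_sq_sub {ι : Type*} [Fintype ι] (x y : ι → ℝ) :
    dist x y ^ 2 ≤ ∑ i, (x i - y i) ^ 2 := by
  have hs : 0 ≤ ∑ i, (x i - y i) ^ 2 := Finset.sum_nonneg fun i _ => sq_nonneg _
  rw [← Real.le_sqrt dist_nonneg hs, dist_pi_le_iff (Real.sqrt_nonneg _)]
  intro i
  rw [Real.dist_eq]
  exact Real.abs_le_sqrt (Finset.single_le_sum (f := fun i => (x i - y i) ^ 2)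
    (fun i _ => sq_nonneg _) (Finset.mem_univ i))

theorem korovkin_ae_weaklyNonlinear_general {N : ℕ} (X : Set (Fin N → ℝ))
    (μ : Measure X)
    (E : Set (X → ℝ))
    -- `E` is a vector sublattice of `𝓕(X)`
    (hEadd : ∀ f ∈ E, ∀ g ∈ E, f + g ∈ E)
    (hEsmul : ∀ (c : ℝ), ∀ f ∈ E, c • f ∈ E)
    -- `E` contains the test functions
    (hone : (fun _ : X => (1 : ℝ)) ∈ E)
    (hpr : ∀ k : Fin N, (fun x : X => (x : Fin N → ℝ) k) ∈ E)
    (hsq : (fun x : X => ∑ k, ((x : Fin N → ℝ) k) ^ 2) ∈ E)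
    -- `(T n)` is a sequence of sublinear and monotone operators from `E` into `E`
    (T : ℕ → (X → ℝ) → (X → ℝ))
    (hsubadd : ∀ n, ∀ f ∈ E, ∀ g ∈ E, T n (f + g) ≤ T n f + T n g)
    (hhom : ∀ n, ∀ (α : ℝ), 0 ≤ α → ∀ f ∈ E, T n (α • f) = α • T n f)
    (hmono : ∀ n, ∀ f ∈ E, ∀ g ∈ E, f ≤ g → T n f ≤ T n g)
    (htrans : ∀ n, ∀ f ∈ E, ∀ (α : ℝ), 0 ≤ α →
      T n (f + α • (fun _ : X => (1 : ℝ))) = T n f + α • T n (fun _ : X => (1 : ℝ)))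
    -- a.e. convergence on the test functions
    (htest1 : ∀ᵐ x ∂μ, Tendsto (fun n => T n (fun _ => 1) x) atTop (𝓝 1))
    (htestpr : ∀ k : Fin N, ∀ᵐ x ∂μ,
      Tendsto (fun n => T n (fun y : X => (y : Fin N → ℝ) k) x) atTop
        (𝓝 ((x : Fin N → ℝ) k)))
    (htestprneg : ∀ k : Fin N, ∀ᵐ x ∂μ,
      Tendsto (fun n => T n (fun y : X => -((y : Fin N → ℝ) k)) x) atTop
        (𝓝 (-((x : Fin N → ℝ) k))))
    (htestsq : ∀ᵐ x ∂μ,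
      Tendsto (fun n => T n (fun y : X => ∑ k, ((y : Fin N → ℝ) k) ^ 2) x) atTop
        (𝓝 (∑ k, ((x : Fin N → ℝ) k) ^ 2)))
    -- conclusion, for every bounded a.e. continuous `f ∈ E`
    (f : X → ℝ) (hfE : f ∈ E)
    (hfb : ∃ M : ℝ, ∀ x, |f x| ≤ M)
    (hfc : μ {x | ¬ ContinuousAt f x} = 0) :
    ∀ᵐ x ∂μ, Tendsto (fun n => T n f x) atTop (𝓝 (f x)) := by
  let E' : Submodule ℝ (X → ℝ) :=
    { carrier := E
      add_mem' := fun ha hb => hEadd _ ha _ hb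
      zero_mem' := by simpa using hEsmul 0 _ hone
      smul_mem' := hEsmul }
  have hT : ∀ n, IsWeaklyNonlinearMonotoneOn E' (T n) := fun n =>
    ⟨hsubadd n, hhom n, hmono n, htrans n⟩
  obtain ⟨M, hM⟩ := hfb
  filter_upwards [htest1, ae_all_iff.2 htestpr, ae_all_iff.2 htestprneg, htestsq,
    ae_iff.2 hfc] with x₀ hT1 hTp hTpneg hTsq hfx₀
  refine tendsto_apply_of_forall_abs_sub_le hT hone hfE (sum_sq_sub_mem hone hpr hsq _) hT1
    (tendsto_apply_sum_sq_sub hT hone hpr hsq hT1 hTp hTpneg hTsq) fun ε hε => ?_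
  obtain ⟨C, hC, hCdom⟩ := hfx₀.exists_abs_sub_le_add_mul_dist_sq hM hε
  exact ⟨C, hC, fun y => (hCdom y).trans (by gcongr; exact dist_sq_le_sum_sq_sub _ _)⟩

/-- **Theorem `thm_a.e.Conv` (ii).** Korovkin-type theorem for a.e.
convergence: weakly nonlinear (sublinear and translatable) monotone operators on a
vector sublattice `E` of functions on a locally compact subset `X ⊆ ℝ^N`, with the
`2N+2` test functions `1, ±pr_1, …, ±pr_N, Σ pr_k²`; conclusion for every bounded
a.e.-continuous member of `E`. -/
theorem korovkin_ae_weaklyNonlinear {N : ℕ} (X : Set (Fin N → ℝ)) [LocallyCompactSpace X]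
    (μ : Measure X)
    (E : Set (X → ℝ))
    -- `E` is a vector sublattice of `𝓕(X)`
    (hEadd : ∀ f ∈ E, ∀ g ∈ E, f + g ∈ E)
    (hEsmul : ∀ (c : ℝ), ∀ f ∈ E, c • f ∈ E)
    (hEsup : ∀ f ∈ E, ∀ g ∈ E, f ⊔ g ∈ E)
    -- `E` contains the test functions
    (hone : (fun _ : X => (1 : ℝ)) ∈ E)
    (hpr : ∀ k : Fin N, (fun x : X => (x : Fin N → ℝ) k) ∈ E)
    (hprneg : ∀ k : Fin N, (fun x : X => -((x : Fin N → ℝ) k)) ∈ E)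
    (hsq : (fun x : X => ∑ k, ((x : Fin N → ℝ) k) ^ 2) ∈ E)
    -- `(T n)` is a sequence of sublinear and monotone operators from `E` into `E`
    (T : ℕ → (X → ℝ) → (X → ℝ))
    (hmap : ∀ n, ∀ f ∈ E, T n f ∈ E)
    (hsubadd : ∀ n, ∀ f ∈ E, ∀ g ∈ E, T n (f + g) ≤ T n f + T n g)
    (hhom : ∀ n, ∀ (α : ℝ), 0 ≤ α → ∀ f ∈ E, T n (α • f) = α • T n f)
    (hmono : ∀ n, ∀ f ∈ E, ∀ g ∈ E, f ≤ g → T n f ≤ T n g)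
    (htrans : ∀ n, ∀ f ∈ E, ∀ (α : ℝ), 0 ≤ α →
      T n (f + α • (fun _ : X => (1 : ℝ))) = T n f + α • T n (fun _ : X => (1 : ℝ)))
    -- a.e. convergence on the test functions
    (htest1 : ∀ᵐ x ∂μ, Tendsto (fun n => T n (fun _ => 1) x) atTop (𝓝 1))
    (htestpr : ∀ k : Fin N, ∀ᵐ x ∂μ,
      Tendsto (fun n => T n (fun y : X => (y : Fin N → ℝ) k) x) atTop
        (𝓝 ((x : Fin N → ℝ) k)))
    (htestprneg : ∀ k : Fin N, ∀ᵐ x ∂μ,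
      Tendsto (fun n => T n (fun y : X => -((y : Fin N → ℝ) k)) x) atTop
        (𝓝 (-((x : Fin N → ℝ) k))))
    (htestsq : ∀ᵐ x ∂μ,
      Tendsto (fun n => T n (fun y : X => ∑ k, ((y : Fin N → ℝ) k) ^ 2) x) atTop
        (𝓝 (∑ k, ((x : Fin N → ℝ) k) ^ 2)))
    -- conclusion, for every bounded a.e. continuous `f ∈ E`
    (f : X → ℝ) (hfE : f ∈ E)
    (hfb : ∃ M : ℝ, ∀ x, |f x| ≤ M)
    (hfc : μ {x | ¬ ContinuousAt f x} = 0) :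
    ∀ᵐ x ∂μ, Tendsto (fun n => T n f x) atTop (𝓝 (f x)) :=
  korovkin_ae_weaklyNonlinear_general X μ E hEadd hEsmul hone hpr hsq T hsubadd hhom hmono htrans
    htest1 htestpr htestprneg htestsq f hfE hfb hfc
end

section
/- Let μ be a positive Borel measure on ℝ^N with compact support, let p ∈ [1, ∞), and let (T_n) be a sequence of weakly nonlinear (sublinear and translatable) and monotone operators from the Banach lattice L^p(μ) into itself such that M := sup_n ‖T_n‖ < ∞, where ‖T_n‖ = sup{‖T_n(f)‖_p : ‖f‖_p ≤ 1}. Assume that ‖T_n(h) − h‖_p → 0 as n → ∞ for each of the test functions h ∈ {1, pr_1, …, pr_N, −pr_1, …, −pr_N, Σ_{k=1}^N pr_k²} (regarded as elements of L^p(μ), which they are since μ has compact support). Then ‖T_n(f) − f‖_p → 0 for every f ∈ L^p(μ). -/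
/-!
Korovkin's classical argument, run in `L^p` instead of `C(K)`. Write `S_y` for the class of
`x ↦ ∑ₖ (xₖ - yₖ)²`; it is a combination `e₂ - 2 ∑ₖ yₖ prₖ + |y|² 𝟙` of test functions whose
coefficients are bounded for `y` in the compact support `K`. For a continuous `g` and `ε > 0`,
uniform continuity gives `|g x - g y| ≤ ε + λ S_y(x)` on `K`. Sublinearity, monotonicity and
translatability turn this into `|T_n g - g(y) 𝟙| ≤ ε 𝟙 + λ S_y + c E_n` in the lattice `L^p`,
where `E_n` collects `|T_n h - h|` over the test functions `h` and does not depend on `y`.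
Reading these inequalities pointwise for `y` in a countable dense subset of `K` and letting
`y → x` gives `|T_n g - g| ≤ ε 𝟙 + c E_n`, whence `T_n g → g`. Finally, the `T_n` are
uniformly Lipschitz (`|T f - T g| ≤ T |f - g|`), so convergence passes from the dense set of
bounded continuous functions to all of `L^p`.
-/

open MeasureTheory Filter Topology Set
open scoped ENNReal NNReal

section LatticeGroup

variable {E : Type*} [Lattice E] [AddCommGroup E]

def korovkinError {ι : Type*} [Fintype ι] (T : E → E) (u q : E) (v : ι → E) : E :=
  |T u - u| + |T q - q| + ∑ i, (|T (v i) - v i| + |T (-v i) - -v i|)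

theorem abs_sub_le_korovkinError [IsOrderedAddMonoid E] {ι : Type*} [Fintype ι] (T : E → E)
    (u q : E) (v : ι → E) : |T u - u| ≤ korovkinError T u q v :=
  (le_add_of_nonneg_right (abs_nonneg _)).trans (le_add_of_nonneg_right
    (Finset.sum_nonneg fun _ _ => add_nonneg (abs_nonneg _) (abs_nonneg _)))

end LatticeGroup

section Algebra

variable {E : Type*} [AddCommGroup E] [Module ℝ E]

def IsTranslatable (T : E → E) (u : E) : Prop :=
  ∀ f (c : ℝ), 0 ≤ c → T (f + c • u) = T f + c • T u

theorem IsTranslatable.map_add_smul {T : E → E} {u : E} (htr : IsTranslatable T u) (f : E)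
    (c : ℝ) : T (f + c • u) = T f + c • T u := by
  rcases le_total 0 c with hc | hc
  · exact htr f c hc
  · have h := htr (f + c • u) (-c) (neg_nonneg.2 hc)
    rw [neg_smul, neg_smul, add_neg_cancel_right, ← sub_eq_add_neg] at h
    rw [h, sub_add_cancel]

theorem IsTranslatable.map_smul {T : E → E} {u : E} (htr : IsTranslatable T u) (h0 : T 0 = 0)
    (c : ℝ) : T (c • u) = c • T u := by
  simpa [h0] using htr.map_add_smul 0 c

def sqDistTest {N : ℕ} (one e2 : E) (pr : Fin N → E) (y : Fin N → ℝ) : E :=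
  e2 + ∑ k, (-2 * y k) • pr k + (∑ k, y k ^ 2) • one

variable [Lattice E]

structure IsSublinear (T : E → E) : Prop where
  map_add_le : ∀ f g, T (f + g) ≤ T f + T g
  map_smul_of_nonneg : ∀ c : ℝ, 0 ≤ c → ∀ f, T (c • f) = c • T f

theorem IsSublinear.map_zero {T : E → E} (hT : IsSublinear T) : T 0 = 0 := by
  simpa using hT.map_smul_of_nonneg 0 le_rfl 0

theorem smul_le_abs_smul_abs [IsOrderedModule ℝ E] (c : ℝ) (x : E) : c • x ≤ |c| • |x| := by
  rcases le_total 0 c with hc | hc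
  · rw [abs_of_nonneg hc]
    exact smul_le_smul_of_nonneg_left (le_abs_self x) hc
  · rw [abs_of_nonpos hc, ← neg_smul_neg]
    exact smul_le_smul_of_nonneg_left (neg_le_abs x) (neg_nonneg.2 hc)

variable [IsOrderedAddMonoid E]

namespace IsSublinear

variable {T : E → E}

theorem map_sum_le (hT : IsSublinear T) {ι : Type*} (s : Finset ι) (h : ι → E) :
    T (∑ i ∈ s, h i) ≤ ∑ i ∈ s, T (h i) :=
  Finset.le_sum_of_subadditive T hT.map_zero.le hT.map_add_le s h

theorem abs_map_sub_map_le (hT : IsSublinear T) (hmono : Monotone T) (f g : E) :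
    |T f - T g| ≤ T |f - g| := by
  have key : ∀ a b : E, T a - T b ≤ T |a - b| := fun a b => by
    rw [sub_le_iff_le_add]
    calc T a = T (a - b + b) := by rw [sub_add_cancel]
      _ ≤ T (a - b) + T b := hT.map_add_le _ _
      _ ≤ T |a - b| + T b := add_le_add (hmono (le_abs_self _)) le_rfl
  exact abs_le'.2 ⟨key f g, by rw [neg_sub, abs_sub_comm]; exact key g f⟩

end IsSublinear

variable [IsOrderedModule ℝ E]

theorem smul_le_smul_of_abs_le {c B : ℝ} {x e : E} (hc : |c| ≤ B) (hx : |x| ≤ e) :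
    c • x ≤ B • e :=
  calc c • x ≤ |c| • |x| := smul_le_abs_smul_abs c x
    _ ≤ |c| • e := smul_le_smul_of_nonneg_left hx (abs_nonneg c)
    _ ≤ B • e := smul_le_smul_of_nonneg_right hc ((abs_nonneg x).trans hx)

namespace IsSublinear

variable {T : E → E}

theorem map_smul_le (hT : IsSublinear T) (c : ℝ) (h : E) :
    T (c • h) ≤ c • h + |c| • (|T h - h| + |T (-h) - -h|) := by
  rcases le_total 0 c with hc | hc
  · calc T (c • h) = c • h + c • (T h - h) := by
          rw [hT.map_smul_of_nonneg c hc, smul_sub, add_sub_cancel]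
      _ ≤ _ := add_le_add le_rfl (smul_le_smul_of_abs_le le_rfl
          (le_add_of_nonneg_right (abs_nonneg _)))
  -- `c • h = (-c) • (-h)`: this is why `-prₖ` is among the test functions
  · calc T (c • h) = c • h + (-c) • (T (-h) - -h) := by
          rw [← neg_smul_neg, hT.map_smul_of_nonneg (-c) (neg_nonneg.2 hc)]
          module
      _ ≤ _ := add_le_add le_rfl (smul_le_smul_of_abs_le (abs_neg c).le
          (le_add_of_nonneg_left (abs_nonneg _)))

theorem map_add_sum_smul_add_smul_le (hT : IsSublinear T) {ι : Type*} [Fintype ι] {u : E}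
    (htr : IsTranslatable T u) (q : E) (v : ι → E) (c : ι → ℝ) (d : ℝ) {A : ℝ} (hA : 1 ≤ A)
    (hc : ∀ i, |c i| ≤ A) (hd : |d| ≤ A) :
    T (q + ∑ i, c i • v i + d • u) ≤
      q + ∑ i, c i • v i + d • u + A • korovkinError T u q v := by
  have hq : T q ≤ q + A • |T q - q| := by
    have h := smul_le_smul_of_abs_le (abs_one.trans_le hA) (le_refl |T q - q|)
    rwa [one_smul, sub_le_iff_le_add'] at h
  have hv : ∀ i, T (c i • v i) ≤ c i • v i + A • (|T (v i) - v i| + |T (-v i) - -v i|) :=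
    fun i => (hT.map_smul_le (c i) (v i)).trans <| add_le_add le_rfl
      (smul_le_smul_of_nonneg_right (hc i) (add_nonneg (abs_nonneg _) (abs_nonneg _)))
  have hu : d • T u ≤ d • u + A • |T u - u| := by
    rw [← sub_le_iff_le_add', ← smul_sub]
    exact smul_le_smul_of_abs_le hd (le_refl |T u - u|)
  calc T (q + ∑ i, c i • v i + d • u) = T (q + ∑ i, c i • v i) + d • T u :=
        htr.map_add_smul _ _
    _ ≤ T q + ∑ i, T (c i • v i) + d • T u :=
        add_le_add ((hT.map_add_le _ _).trans (add_le_add le_rfl (hT.map_sum_le _ _))) le_rfl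
    _ ≤ (q + A • |T q - q|) + ∑ i, (c i • v i + A • (|T (v i) - v i| + |T (-v i) - -v i|))
          + (d • u + A • |T u - u|) :=
        add_le_add (add_le_add hq (Finset.sum_le_sum fun i _ => hv i)) hu
    _ = q + ∑ i, c i • v i + d • u + A • korovkinError T u q v := by
        simp only [korovkinError, smul_add, Finset.sum_add_distrib, Finset.smul_sum]
        abel

theorem map_sub_smul_le (hT : IsSublinear T) (hmono : Monotone T) {u : E}
    (htr : IsTranslatable T u) {f S err : E} {a ε l A C : ℝ} (hε : 0 ≤ ε) (hl : 0 ≤ l)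
    (ha : |a| ≤ C) (hu : |T u - u| ≤ err) (hS : T S ≤ S + A • err)
    (hf : f - a • u ≤ ε • u + l • S) :
    T f - a • u ≤ ε • u + l • S + (C + ε + l * A) • err := by
  have hf' : f ≤ l • S + (a + ε) • u := by
    rw [← sub_nonneg]
    convert sub_nonneg.2 hf using 1
    module
  have hTS : l • (T S - S) ≤ (l * A) • err := by
    rw [mul_smul]
    exact smul_le_smul_of_nonneg_left (sub_le_iff_le_add'.2 hS) hl
  have hTu : (a + ε) • (T u - u) ≤ (C + ε) • err :=
    smul_le_smul_of_abs_le ((abs_add_le a ε).trans (by rw [abs_of_nonneg hε]; linarith)) hu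
  calc T f - a • u ≤ (l • T S + (a + ε) • T u) - a • u := by
        gcongr
        calc T f ≤ T (l • S + (a + ε) • u) := hmono hf'
          _ = l • T S + (a + ε) • T u := by rw [htr.map_add_smul, hT.map_smul_of_nonneg l hl]
    _ = ε • u + l • S + l • (T S - S) + (a + ε) • (T u - u) := by module
    _ ≤ ε • u + l • S + (l * A) • err + (C + ε) • err := add_le_add (add_le_add le_rfl hTS) hTu
    _ = ε • u + l • S + (C + ε + l * A) • err := by module

theorem smul_sub_map_le (hT : IsSublinear T) (hmono : Monotone T) {u : E}
    (htr : IsTranslatable T u) {f S err : E} {a ε l A C : ℝ} (hε : 0 ≤ ε) (hl : 0 ≤ l)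
    (ha : |a| ≤ C) (hu : |T u - u| ≤ err) (hS : T S ≤ S + A • err)
    (hf : a • u - f ≤ ε • u + l • S) :
    a • u - T f ≤ ε • u + l • S + (C + ε + l * A) • err := by
  have hf' : (a - ε) • u ≤ f + l • S := by
    rw [← sub_nonneg]
    convert sub_nonneg.2 hf using 1
    module
  have hTS : l • (T S - S) ≤ (l * A) • err := by
    rw [mul_smul]
    exact smul_le_smul_of_nonneg_left (sub_le_iff_le_add'.2 hS) hl
  have hTu : (a - ε) • (u - T u) ≤ (C + ε) • err :=
    smul_le_smul_of_abs_le ((abs_sub a ε).trans (by rw [abs_of_nonneg hε]; linarith))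
      (abs_sub_comm u (T u) ▸ hu)
  have key : (a - ε) • T u ≤ T f + l • T S :=
    calc (a - ε) • T u = T ((a - ε) • u) := (htr.map_smul hT.map_zero _).symm
      _ ≤ T (f + l • S) := hmono hf'
      _ ≤ T f + l • T S := (hT.map_add_le _ _).trans_eq (by rw [hT.map_smul_of_nonneg l hl])
  calc a • u - T f = ((a - ε) • T u - (T f + l • T S)) + (ε • u + l • S) + l • (T S - S)
        + (a - ε) • (u - T u) := by module
    _ ≤ 0 + (ε • u + l • S) + (l * A) • err + (C + ε) • err :=
        add_le_add (add_le_add (add_le_add (sub_nonpos.2 key) le_rfl) hTS) hTu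
    _ = ε • u + l • S + (C + ε + l * A) • err := by module

theorem abs_map_sub_smul_le (hT : IsSublinear T) (hmono : Monotone T) {u : E}
    (htr : IsTranslatable T u) {f S err : E} {a ε l A C : ℝ} (hε : 0 ≤ ε) (hl : 0 ≤ l)
    (ha : |a| ≤ C) (hu : |T u - u| ≤ err) (hS : T S ≤ S + A • err)
    (hf : |f - a • u| ≤ ε • u + l • S) :
    |T f - a • u| ≤ ε • u + l • S + (C + ε + l * A) • err := by
  have hf' := abs_le'.1 hf
  rw [neg_sub] at hf'
  refine abs_le'.2 ⟨hT.map_sub_smul_le hmono htr hε hl ha hu hS hf'.1, ?_⟩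
  rw [neg_sub]
  exact hT.smul_sub_map_le hmono htr hε hl ha hu hS hf'.2

theorem map_sqDistTest_le {N : ℕ} (hT : IsSublinear T) {one : E} (htr : IsTranslatable T one)
    (e2 : E) (pr : Fin N → E) {R : ℝ} (hR : 0 ≤ R) {y : Fin N → ℝ} (hy : ∀ k, |y k| ≤ R) :
    T (sqDistTest one e2 pr y) ≤
      sqDistTest one e2 pr y + (1 + N * R ^ 2 + 2 * R) • korovkinError T one e2 pr := by
  have hNR : 0 ≤ (N : ℝ) * R ^ 2 := by positivity
  refine hT.map_add_sum_smul_add_smul_le htr e2 pr _ _ (by linarith) (fun k => ?_) ?_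
  · rw [abs_mul, abs_neg, abs_two]
    linarith [hy k]
  · rw [abs_of_nonneg (Finset.sum_nonneg fun k _ => sq_nonneg (y k))]
    calc ∑ k, y k ^ 2 ≤ ∑ _k : Fin N, R ^ 2 :=
          Finset.sum_le_sum fun k _ => sq_le_sq' (abs_le.1 (hy k)).1 (abs_le.1 (hy k)).2
      _ ≤ 1 + N * R ^ 2 + 2 * R := by
          rw [Finset.sum_const, Finset.card_univ, Fintype.card_fin, nsmul_eq_mul]
          linarith

end IsSublinear

end Algebra

section NormedLattice

variable {E : Type*} [NormedAddCommGroup E] [Lattice E]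

theorem tendsto_abs_sub_nhds_zero [HasSolidNorm E] [IsOrderedAddMonoid E] {ι : Type*}
    {l : Filter ι} {f : ι → E} {a : E} (h : Tendsto f l (𝓝 a)) :
    Tendsto (fun i => |f i - a|) l (𝓝 0) := by
  rw [tendsto_zero_iff_norm_tendsto_zero]
  simpa only [norm_abs_eq_norm] using tendsto_iff_norm_sub_tendsto_zero.1 h

theorem tendsto_korovkinError [HasSolidNorm E] [IsOrderedAddMonoid E] {ι : Type*} [Fintype ι]
    {T : ℕ → E → E} {u q : E} {v : ι → E} (hu : Tendsto (fun n => T n u) atTop (𝓝 u))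
    (hq : Tendsto (fun n => T n q) atTop (𝓝 q))
    (hv : ∀ i, Tendsto (fun n => T n (v i)) atTop (𝓝 (v i)))
    (hv' : ∀ i, Tendsto (fun n => T n (-v i)) atTop (𝓝 (-v i))) :
    Tendsto (fun n => korovkinError (T n) u q v) atTop (𝓝 0) := by
  simpa only [korovkinError, add_zero, Finset.sum_const_zero] using
    ((tendsto_abs_sub_nhds_zero hu).add (tendsto_abs_sub_nhds_zero hq)).add
    (tendsto_finsetSum Finset.univ fun i _ =>
      (tendsto_abs_sub_nhds_zero (hv i)).add (tendsto_abs_sub_nhds_zero (hv' i)))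

theorem tendsto_zero_of_forall_abs_le_smul_add [HasSolidNorm E] [NormedSpace ℝ E]
    {x : ℕ → E} (u : E)
    (h : ∀ ε : ℝ, 0 < ε → ∃ e : ℕ → E, Tendsto e atTop (𝓝 0) ∧ ∀ n, |x n| ≤ ε • u + e n) :
    Tendsto x atTop (𝓝 0) := by
  refine NormedAddGroup.tendsto_nhds_zero.2 fun δ hδ => ?_
  set ε := δ / 2 / (‖u‖ + 1)
  have hε : 0 < ε := by positivity
  obtain ⟨e, he, hx⟩ := h ε hε
  filter_upwards [NormedAddGroup.tendsto_nhds_zero.1 he (δ / 2) (half_pos hδ)] with n hn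
  have hεu : ε * ‖u‖ ≤ δ / 2 :=
    calc ε * ‖u‖ ≤ ε * (‖u‖ + 1) := by gcongr; linarith
      _ = δ / 2 := div_mul_cancel₀ _ (by positivity)
  calc ‖x n‖ ≤ ‖ε • u + e n‖ := HasSolidNorm.solid ((hx n).trans (le_abs_self _))
    _ ≤ ε * ‖u‖ + ‖e n‖ := by
        refine (norm_add_le _ _).trans_eq ?_
        rw [norm_smul, Real.norm_of_nonneg hε.le]
    _ < δ := by linarith

theorem IsSublinear.norm_map_le [NormedSpace ℝ E] {T : E → E} (hT : IsSublinear T) {M : ℝ}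
    (hM : ∀ f, ‖f‖ ≤ 1 → ‖T f‖ ≤ M) (f : E) : ‖T f‖ ≤ M * ‖f‖ := by
  rcases eq_or_ne f 0 with rfl | hf
  · simp [hT.map_zero]
  have hf' : 0 < ‖f‖ := norm_pos_iff.2 hf
  have hTf : T f = ‖f‖ • T (‖f‖⁻¹ • f) := by
    rw [← hT.map_smul_of_nonneg _ hf'.le, smul_inv_smul₀ hf'.ne']
  rw [hTf, norm_smul, norm_norm, mul_comm]
  refine mul_le_mul_of_nonneg_right (hM _ ?_) hf'.le
  rw [norm_smul, norm_inv, norm_norm, inv_mul_cancel₀ hf'.ne']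

theorem IsSublinear.lipschitzWith [HasSolidNorm E] [IsOrderedAddMonoid E] [NormedSpace ℝ E]
    {T : E → E} (hT : IsSublinear T) (hmono : Monotone T) {M : ℝ}
    (hM : ∀ f, ‖f‖ ≤ 1 → ‖T f‖ ≤ M) : LipschitzWith M.toNNReal T := by
  refine LipschitzWith.of_dist_le_mul fun f g => ?_
  rw [dist_eq_norm, dist_eq_norm, Real.coe_toNNReal']
  calc ‖T f - T g‖ ≤ ‖T |f - g|‖ :=
        HasSolidNorm.solid ((hT.abs_map_sub_map_le hmono f g).trans (le_abs_self _))
    _ ≤ M * ‖f - g‖ := norm_abs_eq_norm (f - g) ▸ hT.norm_map_le hM _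
    _ ≤ max M 0 * ‖f - g‖ := by gcongr; exact le_max_left M 0

end NormedLattice

theorem tendsto_of_lipschitzWith_of_dense {X : Type*} [PseudoMetricSpace X] {ι : Type*}
    {l : Filter ι} {T : ι → X → X} {K : ℝ≥0} (hT : ∀ i, LipschitzWith K (T i)) {D : Set X}
    (hD : Dense D) (h : ∀ f ∈ D, Tendsto (fun i => T i f) l (𝓝 f)) (f : X) :
    Tendsto (fun i => T i f) l (𝓝 f) :=
  ((LipschitzWith.uniformEquicontinuous T K hT).equicontinuous.isClosed_setOfPred_tendsto
    continuous_id).closure_subset_iff.2 h (hD f)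

theorem IsCompact.exists_abs_sub_le_add_mul_dist_sq {X : Type*} [PseudoMetricSpace X]
    {K : Set X} (hK : IsCompact K) {g : X → ℝ} (hg : ContinuousOn g K) {ε : ℝ} (hε : 0 < ε) :
    ∃ l ≥ 0, ∀ x ∈ K, ∀ y ∈ K, |g x - g y| ≤ ε + l * dist x y ^ 2 := by
  obtain ⟨C, hC⟩ := hK.exists_bound_of_continuousOn hg
  obtain ⟨δ, hδ, hgδ⟩ :=
    Metric.uniformContinuousOn_iff.1 (hK.uniformContinuousOn_of_continuous hg) ε hε
  refine ⟨2 * |C| / δ ^ 2, by positivity, fun x hx y hy => ?_⟩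
  rcases lt_or_ge (dist x y) δ with hxy | hxy
  · have := hgδ x hx y hy hxy
    rw [Real.dist_eq] at this
    nlinarith [show 0 ≤ 2 * |C| / δ ^ 2 * dist x y ^ 2 by positivity]
  · have h2C : |g x - g y| ≤ 2 * |C| := by
      have hgx := (hC x hx).trans (le_abs_self C)
      have hgy := (hC y hy).trans (le_abs_self C)
      rw [Real.norm_eq_abs] at hgx hgy
      linarith [abs_sub (g x) (g y)]
    have : 2 * |C| ≤ 2 * |C| / δ ^ 2 * dist x y ^ 2 := by
      rw [div_mul_eq_mul_div, le_div_iff₀ (by positivity)]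
      gcongr
    linarith

theorem dist_sq_le_sum_sq {N : ℕ} (x y : Fin N → ℝ) : dist x y ^ 2 ≤ ∑ k, (x k - y k) ^ 2 := by
  have h : dist x y ≤ √(∑ k, (x k - y k) ^ 2) := by
    refine (dist_pi_le_iff (Real.sqrt_nonneg _)).2 fun k => ?_
    rw [Real.dist_eq]
    exact Real.abs_le_sqrt (Finset.single_le_sum (f := fun k => (x k - y k) ^ 2)
      (fun _ _ => sq_nonneg _) (Finset.mem_univ k))
  calc dist x y ^ 2 ≤ √(∑ k, (x k - y k) ^ 2) ^ 2 := by gcongr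
    _ = ∑ k, (x k - y k) ^ 2 := Real.sq_sqrt (Finset.sum_nonneg fun _ _ => sq_nonneg _)

theorem ae_diag_of_forall_mem_ae {X : Type*} [TopologicalSpace X]
    [TopologicalSpace.PseudoMetrizableSpace X] [MeasurableSpace X] {μ : Measure X} {K : Set X}
    (hK : TopologicalSpace.IsSeparable K) (hμK : ∀ᵐ x ∂μ, x ∈ K) {P : X → X → Prop}
    (hP : ∀ x, IsClosed {y | P x y}) (h : ∀ y ∈ K, ∀ᵐ x ∂μ, P x y) : ∀ᵐ x ∂μ, P x x := by
  obtain ⟨c, hcK, hc, hKc⟩ := hK.exists_countable_dense_subset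
  filter_upwards [(ae_ball_iff hc).2 fun y hy => h y (hcK hy), hμK] with x hx hxK
  exact (hP x).closure_subset_iff.2 hx (hKc hxK)

theorem Continuous.memLp_of_ae_mem_isCompact {X : Type*} [TopologicalSpace X]
    [MeasurableSpace X] [OpensMeasurableSpace X] {μ : Measure X} [IsFiniteMeasure μ]
    {p : ℝ≥0∞} {K : Set X} (hK : IsCompact K) (hμK : ∀ᵐ x ∂μ, x ∈ K) {f : X → ℝ}
    (hf : Continuous f) : MemLp f p μ := by
  obtain ⟨C, hC⟩ := hK.exists_bound_of_continuousOn hf.continuousOn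
  exact MemLp.of_bound hf.aestronglyMeasurable C (hμK.mono hC)

namespace MeasureTheory.Lp

section

variable {α : Type*} {m : MeasurableSpace α} {μ : Measure α} {p : ℝ≥0∞}

instance : IsOrderedModule ℝ (Lp ℝ p μ) where
  smul_le_smul_of_nonneg_left c hc f g hfg := by
    rw [← Lp.coeFn_le] at hfg ⊢
    filter_upwards [hfg, Lp.coeFn_smul c f, Lp.coeFn_smul c g] with x hx hf hg
    simp only [hf, hg, Pi.smul_apply, smul_eq_mul]
    exact mul_le_mul_of_nonneg_left hx hc
  smul_le_smul_of_nonneg_right f hf c d hcd := by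
    rw [← Lp.coeFn_le] at hf ⊢
    filter_upwards [hf, Lp.coeFn_smul c f, Lp.coeFn_smul d f, Lp.coeFn_zero ℝ p μ]
      with x hx hc hd h0
    simp only [hc, hd, h0, Pi.smul_apply, smul_eq_mul, Pi.zero_apply] at hx ⊢
    exact mul_le_mul_of_nonneg_right hcd hx

theorem coeFn_finset_sum {E : Type*} [NormedAddCommGroup E] {ι : Type*} (s : Finset ι)
    (F : ι → Lp E p μ) : ⇑(∑ i ∈ s, F i) =ᵐ[μ] ∑ i ∈ s, ⇑(F i) := by
  classical
  induction s using Finset.induction_on with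
  | empty => simpa using Lp.coeFn_zero E p μ
  | insert i s hi ih =>
    simp only [Finset.sum_insert hi]
    exact (Lp.coeFn_add _ _).trans (EventuallyEq.rfl.add ih)

theorem abs_sub_smul_le_of_ae_le {one F S : Lp ℝ p μ} (hone : ⇑one =ᵐ[μ] 1) {f s : α → ℝ}
    (hF : ⇑F =ᵐ[μ] f) (hS : ⇑S =ᵐ[μ] s) {a ε l : ℝ} (h : ∀ᵐ x ∂μ, |f x - a| ≤ ε + l * s x) :
    |F - a • one| ≤ ε • one + l • S := by
  rw [← Lp.coeFn_le]
  filter_upwards [h, hone, hF, hS, Lp.coeFn_abs (F - a • one), Lp.coeFn_sub F (a • one),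
    Lp.coeFn_smul a one, Lp.coeFn_add (ε • one) (l • S), Lp.coeFn_smul ε one, Lp.coeFn_smul l S]
    with x h0 h1 h2 h3 h4 h5 h6 h7 h8 h9
  simpa only [h1, h2, h3, h4, h5, h6, h7, h8, h9, Pi.sub_apply, Pi.add_apply, Pi.smul_apply,
    Pi.one_apply, smul_eq_mul, mul_one] using h0

end

theorem coeFn_sqDistTest {N : ℕ} {μ : Measure (Fin N → ℝ)} {p : ℝ≥0∞} {one e2 : Lp ℝ p μ}
    {pr : Fin N → Lp ℝ p μ} (hone : ⇑one =ᵐ[μ] 1) (he2 : ⇑e2 =ᵐ[μ] fun x => ∑ k, x k ^ 2)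
    (hpr : ∀ k, ⇑(pr k) =ᵐ[μ] fun x => x k) (y : Fin N → ℝ) :
    ⇑(sqDistTest one e2 pr y) =ᵐ[μ] fun x => ∑ k, (x k - y k) ^ 2 := by
  have hsum : ∀ᵐ x ∂μ, ∀ k, ((-2 * y k) • pr k) x = -2 * y k * x k := by
    refine ae_all_iff.2 fun k => ?_
    filter_upwards [Lp.coeFn_smul (-2 * y k) (pr k), hpr k] with x h1 h2
    rw [h1, Pi.smul_apply, h2, smul_eq_mul]
  filter_upwards [Lp.coeFn_add (e2 + ∑ k, (-2 * y k) • pr k) ((∑ k, y k ^ 2) • one),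
    Lp.coeFn_add e2 (∑ k, (-2 * y k) • pr k), Lp.coeFn_finset_sum Finset.univ
    fun k => (-2 * y k) • pr k, Lp.coeFn_smul (∑ k, y k ^ 2) one, hone, he2, hsum]
    with x h1 h2 h3 h4 h5 h6 h7
  simp only [sqDistTest, h1, Pi.add_apply, h2, h3, h4, h5, h6, Finset.sum_apply, h7,
    Pi.smul_apply, Pi.one_apply, smul_eq_mul, mul_one, ← Finset.sum_add_distrib]
  exact Finset.sum_congr rfl fun k _ => by ring

theorem abs_sub_le_of_forall_abs_sub_smul_le {X : Type*} [TopologicalSpace X]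
    [TopologicalSpace.PseudoMetrizableSpace X] [MeasurableSpace X] {μ : Measure X} {p : ℝ≥0∞}
    {K : Set X} (hK : TopologicalSpace.IsSeparable K) (hμK : ∀ᵐ x ∂μ, x ∈ K)
    {one : Lp ℝ p μ} (hone : ⇑one =ᵐ[μ] 1) {s : X → X → ℝ} (hs : ∀ x, Continuous (s x))
    (hss : ∀ x, s x x = 0) {S : X → Lp ℝ p μ} (hS : ∀ y, ⇑(S y) =ᵐ[μ] fun x => s x y)
    {g : X → ℝ} (hg : Continuous g) {G : Lp ℝ p μ} (hG : ⇑G =ᵐ[μ] g) {F W : Lp ℝ p μ}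
    {ε l : ℝ} (h : ∀ y ∈ K, |F - g y • one| ≤ ε • one + l • S y + W) :
    |F - G| ≤ ε • one + W := by
  have hpt : ∀ y ∈ K, ∀ᵐ x ∂μ, |F x - g y| ≤ ε + l * s x y + W x := by
    intro y hy
    filter_upwards [(Lp.coeFn_le _ _).2 (h y hy), Lp.coeFn_abs (F - g y • one),
      Lp.coeFn_sub F (g y • one), Lp.coeFn_smul (g y) one, Lp.coeFn_add (ε • one + l • S y) W,
      Lp.coeFn_add (ε • one) (l • S y), Lp.coeFn_smul ε one, Lp.coeFn_smul l (S y), hone, hS y]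
      with x h0 h1 h2 h3 h4 h5 h6 h7 h8 h9
    simpa only [h1, h2, h3, h4, h5, h6, h7, h8, h9, Pi.sub_apply, Pi.add_apply, Pi.smul_apply,
      Pi.one_apply, smul_eq_mul, mul_one] using h0
  have hdiag := ae_diag_of_forall_mem_ae hK hμK
    (P := fun x y => |F x - g y| ≤ ε + l * s x y + W x) (fun x =>
      isClosed_le (continuous_const.sub hg).abs
        ((continuous_const.add (continuous_const.mul (hs x))).add continuous_const)) hpt
  rw [← Lp.coeFn_le]
  filter_upwards [hdiag, Lp.coeFn_abs (F - G), Lp.coeFn_sub F G, hG, Lp.coeFn_add (ε • one) W,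
    Lp.coeFn_smul ε one, hone] with x h0 h1 h2 h3 h4 h5 h6
  simpa only [h1, h2, h3, h4, h5, h6, hss, Pi.sub_apply, Pi.add_apply, Pi.smul_apply,
    Pi.one_apply, smul_eq_mul, mul_one, mul_zero, add_zero] using h0

end MeasureTheory.Lp

section Korovkin

variable {N : ℕ} {μ : Measure (Fin N → ℝ)} {p : ℝ≥0∞} {K : Set (Fin N → ℝ)}
  {T : ℕ → Lp ℝ p μ → Lp ℝ p μ} {one e2 : Lp ℝ p μ} {pr : Fin N → Lp ℝ p μ}

theorem exists_abs_map_sub_le_korovkinError (hK : IsCompact K) (hμK : ∀ᵐ x ∂μ, x ∈ K)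
    (hT : ∀ n, IsSublinear (T n)) (hmono : ∀ n, Monotone (T n))
    (htr : ∀ n, IsTranslatable (T n) one) (hone : ⇑one =ᵐ[μ] 1)
    (he2 : ⇑e2 =ᵐ[μ] fun x => ∑ k, x k ^ 2) (hpr : ∀ k, ⇑(pr k) =ᵐ[μ] fun x => x k)
    {g : (Fin N → ℝ) → ℝ} (hg : Continuous g) {G : Lp ℝ p μ} (hG : ⇑G =ᵐ[μ] g) {ε : ℝ}
    (hε : 0 < ε) : ∃ c : ℝ, ∀ n, |T n G - G| ≤ ε • one + c • korovkinError (T n) one e2 pr := by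
  obtain ⟨l, hl, hgK⟩ := hK.exists_abs_sub_le_add_mul_dist_sq hg.continuousOn hε
  obtain ⟨C, hC⟩ := hK.exists_bound_of_continuousOn hg.continuousOn
  obtain ⟨R, hR0, hR⟩ := hK.isBounded.exists_pos_norm_le
  have hS := Lp.coeFn_sqDistTest hone he2 hpr
  refine ⟨C + ε + l * (1 + N * R ^ 2 + 2 * R), fun n =>
    Lp.abs_sub_le_of_forall_abs_sub_smul_le hK.isSeparable hμK hone
      (s := fun x y => ∑ k, (x k - y k) ^ 2) (l := l) (by fun_prop) (by simp) hS hg hG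
      fun y hy => ?_⟩
  have hGy : |G - g y • one| ≤ ε • one + l • sqDistTest one e2 pr y :=
    Lp.abs_sub_smul_le_of_ae_le hone hG (hS y) <| hμK.mono fun x hx =>
      (hgK x hx y hy).trans (by gcongr; exact dist_sq_le_sum_sq x y)
  have hTS := (hT n).map_sqDistTest_le (htr n) e2 pr hR0.le
    fun k => (norm_le_pi_norm y k).trans (hR y hy)
  exact (hT n).abs_map_sub_smul_le (hmono n) (htr n) hε.le hl
    ((Real.norm_eq_abs _).ge.trans (hC y hy)) (abs_sub_le_korovkinError _ _ _ _) hTS hGy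

theorem tendsto_map_of_continuous [Fact (1 ≤ p)] (hK : IsCompact K) (hμK : ∀ᵐ x ∂μ, x ∈ K)
    (hT : ∀ n, IsSublinear (T n)) (hmono : ∀ n, Monotone (T n))
    (htr : ∀ n, IsTranslatable (T n) one) (hone : ⇑one =ᵐ[μ] 1)
    (he2 : ⇑e2 =ᵐ[μ] fun x => ∑ k, x k ^ 2) (hpr : ∀ k, ⇑(pr k) =ᵐ[μ] fun x => x k)
    (herr : Tendsto (fun n => korovkinError (T n) one e2 pr) atTop (𝓝 0))
    {g : (Fin N → ℝ) → ℝ} (hg : Continuous g) {G : Lp ℝ p μ} (hG : ⇑G =ᵐ[μ] g) :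
    Tendsto (fun n => T n G) atTop (𝓝 G) := by
  rw [← tendsto_sub_nhds_zero_iff]
  refine tendsto_zero_of_forall_abs_le_smul_add one fun ε hε => ?_
  obtain ⟨c, hc⟩ := exists_abs_map_sub_le_korovkinError hK hμK hT hmono htr hone he2 hpr hg hG hε
  exact ⟨fun n => c • korovkinError (T n) one e2 pr, by simpa using herr.const_smul c, hc⟩

end Korovkin

/-- **Theorem `thmLp`, second part.** Korovkin-type theorem for
convergence in `p`-mean: weakly nonlinear (sublinear and translatable) and monotone
operators on `L^p(μ)`, `μ` a finite Borel measure on `ℝ^N` with compact support,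
uniformly bounded in norm, with the test functions `1, ±pr_1, …, ±pr_N, Σ pr_k²`
(regarded as elements of `L^p(μ)`); conclusion for every `f ∈ L^p(μ)`. -/
theorem korovkin_Lp_weaklyNonlinear {N : ℕ} (μ : Measure (Fin N → ℝ))
    [IsFiniteMeasure μ]
    (hμsupp : ∃ K : Set (Fin N → ℝ), IsCompact K ∧ μ Kᶜ = 0)
    (p : ℝ≥0∞) (hp1 : 1 ≤ p) (hptop : p ≠ ∞)
    (T : ℕ → Lp ℝ p μ → Lp ℝ p μ)
    (hsubadd : ∀ n, ∀ f g : Lp ℝ p μ, T n (f + g) ≤ T n f + T n g)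
    (hhom : ∀ n, ∀ (α : ℝ), 0 ≤ α → ∀ f : Lp ℝ p μ, T n (α • f) = α • T n f)
    (hmono : ∀ n, ∀ f g : Lp ℝ p μ, f ≤ g → T n f ≤ T n g)
    -- translatability: `T (f + α • 1) = T f + α • T 1`, `1` the constant function one
    (htrans : ∀ n, ∀ one : Lp ℝ p μ, (⇑one : (Fin N → ℝ) → ℝ) =ᵐ[μ] (fun _ => (1 : ℝ)) →
      ∀ f : Lp ℝ p μ, ∀ α : ℝ, 0 ≤ α → T n (f + α • one) = T n f + α • T n one)
    -- `M = sup_n ‖T n‖ < ∞`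
    (hM : ∃ M : ℝ, ∀ n, ∀ f : Lp ℝ p μ, ‖f‖ ≤ 1 → ‖T n f‖ ≤ M)
    -- convergence in `p`-mean on the test functions (as elements of `L^p(μ)`)
    (htest : ∀ h : (Fin N → ℝ) → ℝ,
      ((h = fun _ => (1 : ℝ)) ∨ (∃ k : Fin N, h = fun x => x k) ∨
        (∃ k : Fin N, h = fun x => -(x k)) ∨ (h = fun x => ∑ k, (x k) ^ 2)) →
      ∀ H : Lp ℝ p μ, (⇑H : (Fin N → ℝ) → ℝ) =ᵐ[μ] h →
        Tendsto (fun n => ‖T n H - H‖) atTop (𝓝 0))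
    (f : Lp ℝ p μ) :
    Tendsto (fun n => ‖T n f - f‖) atTop (𝓝 0) := by
  have : Fact (1 ≤ p) := ⟨hp1⟩
  obtain ⟨K, hK, hμK⟩ := hμsupp
  obtain ⟨M, hM⟩ := hM
  have hKae : ∀ᵐ x ∂μ, x ∈ K := mem_ae_iff.2 hμK
  have hT n : IsSublinear (T n) := ⟨hsubadd n, hhom n⟩
  have hmono' n : Monotone (T n) := fun f g => hmono n f g
  have hmem {h : (Fin N → ℝ) → ℝ} (hh : Continuous h) : MemLp h p μ :=
    hh.memLp_of_ae_mem_isCompact hK hKae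
  have hconv h hh H hH : Tendsto (fun n => T n H) atTop (𝓝 H) :=
    tendsto_iff_norm_sub_tendsto_zero.2 (htest h hh H hH)
  set one := (hmem continuous_const).toLp fun _ => (1 : ℝ)
  set e2 := (hmem (by fun_prop)).toLp fun x => ∑ k, x k ^ 2
  set pr := fun k : Fin N => (hmem (continuous_apply k)).toLp fun x : Fin N → ℝ => x k
  have hone : ⇑one =ᵐ[μ] fun _ => (1 : ℝ) := MemLp.coeFn_toLp _
  have he2 : ⇑e2 =ᵐ[μ] fun x => ∑ k, x k ^ 2 := MemLp.coeFn_toLp _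
  have hpr k : ⇑(pr k) =ᵐ[μ] fun x => x k := MemLp.coeFn_toLp _
  have herr := tendsto_korovkinError (hconv _ (Or.inl rfl) one hone)
    (hconv _ (Or.inr (Or.inr (Or.inr rfl))) e2 he2)
    (fun k => hconv _ (Or.inr (Or.inl ⟨k, rfl⟩)) (pr k) (hpr k))
    (fun k => hconv _ (Or.inr (Or.inr (Or.inl ⟨k, rfl⟩))) (-pr k)
      ((Lp.coeFn_neg _).trans (hpr k).neg))
  refine tendsto_iff_norm_sub_tendsto_zero.1 (tendsto_of_lipschitzWith_of_dense
    (fun n => (hT n).lipschitzWith (hmono' n) (hM n))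
    (Lp.boundedContinuousFunction_dense ℝ μ hptop) (fun F hF => ?_) f)
  obtain ⟨g, hg⟩ := Lp.mem_boundedContinuousFunction_iff.1 hF
  exact tendsto_map_of_continuous hK hKae hT hmono' (fun n => htrans n one hone) hone he2 hpr herr
    g.continuous (hg ▸ g.toContinuousMap.coeFn_toAEEqFun μ)
end
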